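/- Let α = (α_i)_{i≥0} be the sequence of nonzero Fibonacci numbers, α_i = F(i+1) where F(0) = 0, F(1) = 1, and let β = (β_i)_{i≥0} be the sequence of factorials β_i = (i+1)!. Then for every integer n ≥ 2, det(P_{α,β}(n)) = (-1)^n. -/

import Mathlib

/-!
The binomial transform `α̌ᵢ = ∑ₖ C(i,k) αₖ` satisfies `α̌ᵢ₊₁ = α̌ᵢ + (shift α)̌ᵢ`, so the double
binomial transform of a shift-invariant array obeys Pascal's rule. Applied to the Töplitz array
of the inverse transforms `α̂`, `β̂`, this gives `P_{α,β}(n) = L · T_{α̂,β̂}(n) · Lᵀ` with `L` the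
unipotent Pascal matrix, so `det P = det T`.

For `αᵢ = F(i+1)` one finds `α̂ = 1, 0, 1, -1, 2, -3, …`, with `α̂ₘ₊₂ = α̂ₘ - α̂ₘ₊₁`; for
`βᵢ = (i+1)!`, `β̂₁ = 1` and `β̂₂ = 3`. The row operations `rowᵢ += rowᵢ₋₁ - rowᵢ₋₂` (`i ≥ 2`) make
`T` upper triangular with diagonal `1, 1, 2 α̂₀ - β̂₂, …, 2 α̂₀ - β̂₂`, i.e. `1, 1, -1, …, -1`.
-/

open Matrix

/-- Entry `P_{i,j}` of the generalized Pascal triangle associated to sequences `α`, `β`: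
`P_{i,0} = α i`, `P_{0,j} = β j`, and `P_{i,j} = P_{i-1,j} + P_{i,j-1}` for `i, j ≥ 1`. -/
def pascalEntry {R : Type*} [CommRing R] (α β : ℕ → R) : ℕ → ℕ → R
  | i, 0 => α i
  | 0, j + 1 => β (j + 1)
  | i + 1, j + 1 => pascalEntry α β i (j + 1) + pascalEntry α β (i + 1) j

/-- The generalized Pascal triangle `P_{α,β}(n)`. -/
def genPascal {R : Type*} [CommRing R] (α β : ℕ → R) (n : ℕ) :
    Matrix (Fin n) (Fin n) R :=
  Matrix.of fun i j => pascalEntry α β (i : ℕ) (j : ℕ)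

/-- The Töplitz matrix `T_{α,β}(n)`: `t_{i,j} = α_{i-j}` if `i ≥ j`, else `β_{j-i}`. -/
def toeplitz {R : Type*} [CommRing R] (α β : ℕ → R) (n : ℕ) :
    Matrix (Fin n) (Fin n) R :=
  Matrix.of fun i j => if (j : ℕ) ≤ (i : ℕ) then α ((i : ℕ) - (j : ℕ)) else β ((j : ℕ) - (i : ℕ))

/-- The unipotent lower triangular matrix `L(n)` with `L_{i,j} = C(i,j)` for `i ≥ j`. -/
def lowerL (R : Type*) [CommRing R] (n : ℕ) : Matrix (Fin n) (Fin n) R :=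
  Matrix.of fun i j => if (j : ℕ) ≤ (i : ℕ) then ((i : ℕ).choose (j : ℕ) : R) else 0

/-- The binomial inverse transform `α̂_i = ∑_{k=0}^{i} (-1)^{i+k} C(i,k) α_k`. -/
def hatSeq {R : Type*} [CommRing R] (α : ℕ → R) (i : ℕ) : R :=
  ∑ k ∈ Finset.range (i + 1), (-1 : R) ^ (i + k) * (i.choose k : R) * α k

/-- The binomial transform `α̌_i = ∑_{k=0}^{i} C(i,k) α_k`. -/
def checkSeq {R : Type*} [CommRing R] (α : ℕ → R) (i : ℕ) : R :=
  ∑ k ∈ Finset.range (i + 1), (i.choose k : R) * α k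

open Finset

section BinomialTransform

variable {R : Type*} [CommRing R]

theorem checkSeq_zero (f : ℕ → R) : checkSeq f 0 = f 0 := by
  simp [checkSeq]

theorem hatSeq_zero (f : ℕ → R) : hatSeq f 0 = f 0 := by
  simp [hatSeq]

theorem checkSeq_add (f g : ℕ → R) (n : ℕ) :
    checkSeq (fun k => f k + g k) n = checkSeq f n + checkSeq g n := by
  simp only [checkSeq, mul_add, sum_add_distrib]

theorem hatSeq_add (f g : ℕ → R) (n : ℕ) :
    hatSeq (fun k => f k + g k) n = hatSeq f n + hatSeq g n := by
  simp only [hatSeq, mul_add, sum_add_distrib]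

theorem checkSeq_succ (f : ℕ → R) (n : ℕ) :
    checkSeq f (n + 1) = checkSeq f n + checkSeq (fun k => f (k + 1)) n := by
  simp only [checkSeq]
  rw [sum_range_succ' _ (n + 1)]
  simp only [Nat.choose_succ_succ, Nat.cast_add, add_mul, sum_add_distrib]
  rw [sum_range_succ (fun k => (n.choose (k + 1) : R) * f (k + 1)),
    sum_range_succ' (fun k => (n.choose k : R) * f k)]
  simp only [Nat.choose_succ_self, Nat.choose_zero_right, Nat.cast_zero, zero_mul, add_zero]
  ring

theorem hatSeq_eq_fwdDiff_iter (f : ℕ → R) (i : ℕ) : hatSeq f i = (fwdDiff 1)^[i] f 0 := by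
  rw [hatSeq, fwdDiff_iter_eq_sum_shift]
  refine sum_congr rfl fun k hk => ?_
  obtain ⟨d, rfl⟩ := Nat.exists_eq_add_of_le' (Nat.lt_succ_iff.mp (mem_range.mp hk))
  rw [add_assoc, pow_add, Even.neg_one_pow ⟨k, rfl⟩]
  simp [zsmul_eq_mul]

theorem hatSeq_succ (f : ℕ → R) (n : ℕ) :
    hatSeq f (n + 1) = hatSeq (fun k => f (k + 1)) n - hatSeq f n := by
  have h_sub := map_sub (fwdDiff_aux.fwdDiffₗ ℕ R 1 ^ n) (fun k => f (k + 1)) f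
  rw [fwdDiff_aux.coe_fwdDiffₗ_pow] at h_sub
  simp only [hatSeq_eq_fwdDiff_iter, Function.iterate_succ_apply]
  exact congrFun h_sub 0

/-- Binomial inversion, via the Gregory–Newton formula. -/
theorem checkSeq_hatSeq (f : ℕ → R) (i : ℕ) : checkSeq (hatSeq f) i = f i := by
  simpa [checkSeq, hatSeq_eq_fwdDiff_iter, nsmul_eq_mul] using
    (shift_eq_sum_fwdDiff_iter 1 f i 0).symm

end BinomialTransform

section ToeplitzEntry

variable {R : Type*} (a b : ℕ → R)

def toeplitzEntry (k l : ℕ) : R :=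
  if l ≤ k then a (k - l) else b (l - k)

theorem toeplitzEntry_self (k : ℕ) : toeplitzEntry a b k k = a 0 := by
  simp [toeplitzEntry]

theorem toeplitzEntry_add_left (j m : ℕ) : toeplitzEntry a b (j + m) j = a m := by
  simp [toeplitzEntry]

theorem toeplitzEntry_succ_succ (k l : ℕ) :
    toeplitzEntry a b (k + 1) (l + 1) = toeplitzEntry a b k l := by
  simp [toeplitzEntry]

theorem toeplitz_eq_of [CommRing R] (n : ℕ) :
    toeplitz a b n = of fun i j : Fin n => toeplitzEntry a b i j :=
  rfl

end ToeplitzEntry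

section Factorization

variable {R : Type*} [CommRing R]

theorem eq_pascalEntry {α β : ℕ → R} {P : ℕ → ℕ → R} (h_left : ∀ i, P i 0 = α i)
    (h_top : ∀ j, P 0 (j + 1) = β (j + 1))
    (h_rec : ∀ i j, P (i + 1) (j + 1) = P i (j + 1) + P (i + 1) j) (i j : ℕ) :
    P i j = pascalEntry α β i j := by
  induction i, j using pascalEntry.induct with
  | case1 i => rw [h_left, pascalEntry]
  | case2 j => rw [h_top, pascalEntry]
  | case3 i j ih₁ ih₂ => rw [h_rec, ih₁, ih₂, pascalEntry]

/-- The entries of `L * t * Lᵀ`, with `L` the lower Pascal matrix. -/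
def checkSeq₂ (t : ℕ → ℕ → R) (i j : ℕ) : R :=
  checkSeq (fun l => checkSeq (fun k => t k l) i) j

theorem checkSeq₂_succ_succ {t : ℕ → ℕ → R} (ht : ∀ k l, t (k + 1) (l + 1) = t k l) (i j : ℕ) :
    checkSeq₂ t (i + 1) (j + 1) = checkSeq₂ t i (j + 1) + checkSeq₂ t (i + 1) j := by
  simp only [checkSeq₂, checkSeq_succ _ i, checkSeq_add, checkSeq_succ _ j, ht]
  ring

theorem pascalEntry_eq_checkSeq₂ {α β : ℕ → R} (h : α 0 = β 0) (i j : ℕ) :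
    pascalEntry α β i j = checkSeq₂ (toeplitzEntry (hatSeq α) (hatSeq β)) i j := by
  refine (eq_pascalEntry (fun i => ?_) (fun j => ?_)
    (checkSeq₂_succ_succ (toeplitzEntry_succ_succ _ _)) i j).symm
  · simp [checkSeq₂, checkSeq_zero, toeplitzEntry, checkSeq_hatSeq]
  · have h_row : (fun l => toeplitzEntry (hatSeq α) (hatSeq β) 0 l) = hatSeq β := by
      funext l
      cases l <;> simp [toeplitzEntry, hatSeq_zero, h]
    simp only [checkSeq₂, checkSeq_zero, h_row, checkSeq_hatSeq]

theorem lowerL_apply {n : ℕ} (i j : Fin n) : lowerL R n i j = ((i : ℕ).choose j : R) := by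
  rw [lowerL, of_apply, ite_eq_left_iff, not_le]
  intro h
  rw [Nat.choose_eq_zero_of_lt h, Nat.cast_zero]

theorem det_lowerL (n : ℕ) : (lowerL R n).det = 1 := by
  rw [det_of_isLowerTriangular _ fun i j (h : i < j) => by
    rw [lowerL_apply, Nat.choose_eq_zero_of_lt h, Nat.cast_zero]]
  simp [lowerL_apply]

theorem sum_choose_mul_eq_checkSeq {n : ℕ} (i : Fin n) (f : ℕ → R) :
    ∑ k : Fin n, ((i : ℕ).choose k : R) * f k = checkSeq f i := by
  rw [Fin.sum_univ_eq_sum_range (fun k => ((i : ℕ).choose k : R) * f k), checkSeq]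
  refine (sum_subset (range_subset_range.mpr i.isLt) fun k _ hk => ?_).symm
  rw [Nat.choose_eq_zero_of_lt (by simpa using hk), Nat.cast_zero, zero_mul]

theorem genPascal_eq_lowerL_mul_toeplitz_mul_transpose {α β : ℕ → R} (h : α 0 = β 0) (n : ℕ) :
    genPascal α β n = lowerL R n * toeplitz (hatSeq α) (hatSeq β) n * (lowerL R n)ᵀ := by
  ext i j
  simp only [genPascal, of_apply, pascalEntry_eq_checkSeq₂ h, checkSeq₂, mul_apply,
    transpose_apply, lowerL_apply, ← sum_choose_mul_eq_checkSeq j]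
  refine sum_congr rfl fun l _ => ?_
  rw [← sum_choose_mul_eq_checkSeq i, mul_comm]
  rfl

end Factorization

section ToeplitzDeterminant

variable {R : Type*} [CommRing R] {a b : ℕ → R}

theorem toeplitzEntry_recurrence_of_lt (ha : ∀ m, a (m + 2) = a m - a (m + 1))
    (ha1 : a 1 = 0) (hb1 : b 1 = a 0) {r j : ℕ} (hj : j < r + 2) :
    toeplitzEntry a b (r + 2) j + toeplitzEntry a b (r + 1) j - toeplitzEntry a b r j = 0 := by
  obtain hjr | rfl : j ≤ r ∨ j = r + 1 := by omega
  · obtain ⟨d, rfl⟩ := Nat.exists_eq_add_of_le hjr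
    simp only [add_assoc, toeplitzEntry_add_left, ha]
    ring
  · simp [toeplitzEntry, ha1, hb1]

theorem toeplitzEntry_recurrence_self (hb1 : b 1 = a 0) (r : ℕ) :
    toeplitzEntry a b (r + 2) (r + 2) + toeplitzEntry a b (r + 1) (r + 2) -
      toeplitzEntry a b r (r + 2) = 2 * a 0 - b 2 := by
  simp [toeplitzEntry, hb1]
  ring

/-- Left multiplication adds row `i - 1` and subtracts row `i - 2` from each row `i ≥ 2`. -/
def recurrenceRowOp (R : Type*) [CommRing R] (n : ℕ) : Matrix (Fin n) (Fin n) R :=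
  of fun i k => (if (k : ℕ) = i then 1 else 0) +
    if 2 ≤ (i : ℕ) then (if (k : ℕ) = i - 1 then 1 else 0) - (if (k : ℕ) = i - 2 then 1 else 0)
    else 0

theorem det_recurrenceRowOp (n : ℕ) : (recurrenceRowOp R n).det = 1 := by
  rw [det_of_isLowerTriangular _ fun i j (h : i < j) => by
    have h' : (i : ℕ) < j := h
    simp [recurrenceRowOp, show (j : ℕ) ≠ i by omega, show (j : ℕ) ≠ i - 1 by omega,
      show (j : ℕ) ≠ i - 2 by omega]]
  refine prod_eq_one fun i _ => ?_
  by_cases h : 2 ≤ (i : ℕ)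
  · simp [recurrenceRowOp, h, show (i : ℕ) ≠ i - 1 by omega, show (i : ℕ) ≠ i - 2 by omega]
  · simp [recurrenceRowOp, h]

theorem recurrenceRowOp_mul_apply {n : ℕ} (m : ℕ → ℕ → R) (i j : Fin n) :
    (recurrenceRowOp R n * of fun k l : Fin n => m k l) i j =
      m i j + if 2 ≤ (i : ℕ) then m (i - 1) j - m (i - 2) j else 0 := by
  simp only [mul_apply, recurrenceRowOp, of_apply]
  rw [Fin.sum_univ_eq_sum_range (fun k => ((if k = i then 1 else 0) +
    if 2 ≤ (i : ℕ) then (if k = i - 1 then 1 else 0) - (if k = i - 2 then (1 : R) else 0)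
    else 0) * m k j)]
  have hi : (i : ℕ) < n := i.isLt
  split_ifs
  · simp [add_mul, sub_mul, sum_add_distrib, sum_sub_distrib, hi, show (i : ℕ) - 1 < n by omega,
      show (i : ℕ) - 2 < n by omega]
  · simp [hi]

theorem recurrenceRowOp_mul_apply_of_lt_two {n : ℕ} (m : ℕ → ℕ → R) {i : Fin n}
    (hi : (i : ℕ) < 2) (j : Fin n) :
    (recurrenceRowOp R n * of fun k l : Fin n => m k l) i j = m i j := by
  rw [recurrenceRowOp_mul_apply, if_neg (by omega), add_zero]

theorem recurrenceRowOp_mul_apply_of_eq_add_two {n : ℕ} (m : ℕ → ℕ → R) {i : Fin n} {r : ℕ}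
    (hi : (i : ℕ) = r + 2) (j : Fin n) :
    (recurrenceRowOp R n * of fun k l : Fin n => m k l) i j =
      m (r + 2) j + m (r + 1) j - m r j := by
  rw [recurrenceRowOp_mul_apply, if_pos (by omega), hi, ← add_sub_assoc]
  rfl

theorem isUpperTriangular_recurrenceRowOp_mul_toeplitz (ha : ∀ m, a (m + 2) = a m - a (m + 1))
    (ha1 : a 1 = 0) (hb1 : b 1 = a 0) (n : ℕ) :
    (recurrenceRowOp R n * toeplitz a b n).IsUpperTriangular := by
  intro i j (hji : j < i)
  rw [toeplitz_eq_of]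
  obtain hi | hi := lt_or_ge (i : ℕ) 2
  · rw [recurrenceRowOp_mul_apply_of_lt_two _ hi, show (i : ℕ) = 1 by omega,
      show (j : ℕ) = 0 by omega]
    exact ha1
  · rw [recurrenceRowOp_mul_apply_of_eq_add_two _ (Nat.sub_add_cancel hi).symm]
    exact toeplitzEntry_recurrence_of_lt ha ha1 hb1 (by omega)

theorem recurrenceRowOp_mul_toeplitz_apply_self_of_lt_two {n : ℕ} {i : Fin n}
    (hi : (i : ℕ) < 2) : (recurrenceRowOp R n * toeplitz a b n) i i = a 0 := by
  rw [toeplitz_eq_of, recurrenceRowOp_mul_apply_of_lt_two _ hi, toeplitzEntry_self]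

theorem recurrenceRowOp_mul_toeplitz_apply_self_of_eq_add_two (hb1 : b 1 = a 0) {n : ℕ}
    {i : Fin n} {r : ℕ} (hi : (i : ℕ) = r + 2) :
    (recurrenceRowOp R n * toeplitz a b n) i i = 2 * a 0 - b 2 := by
  rw [toeplitz_eq_of, recurrenceRowOp_mul_apply_of_eq_add_two _ hi, hi,
    toeplitzEntry_recurrence_self hb1]

theorem det_toeplitz_of_recurrence (ha : ∀ m, a (m + 2) = a m - a (m + 1))
    (ha1 : a 1 = 0) (hb1 : b 1 = a 0) (k : ℕ) :
    (toeplitz a b (2 + k)).det = a 0 ^ 2 * (2 * a 0 - b 2) ^ k := by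
  calc (toeplitz a b (2 + k)).det = (recurrenceRowOp R (2 + k) * toeplitz a b (2 + k)).det := by
        rw [det_mul, det_recurrenceRowOp, one_mul]
    _ = ∏ i, (recurrenceRowOp R (2 + k) * toeplitz a b (2 + k)) i i :=
        det_of_isUpperTriangular (isUpperTriangular_recurrenceRowOp_mul_toeplitz ha ha1 hb1 _)
    _ = a 0 ^ 2 * (2 * a 0 - b 2) ^ k := by
        rw [Fin.prod_univ_add,
          prod_congr rfl fun i _ =>
            recurrenceRowOp_mul_toeplitz_apply_self_of_lt_two (Fin.castAdd_lt k i),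
          prod_congr rfl fun i _ => recurrenceRowOp_mul_toeplitz_apply_self_of_eq_add_two hb1
            (i := Fin.natAdd 2 i) (add_comm 2 (i : ℕ)),
          prod_const, prod_const, card_univ, card_univ, Fintype.card_fin, Fintype.card_fin]

end ToeplitzDeterminant

theorem hatSeq_fib_shift_succ (m : ℕ) :
    hatSeq (fun i => (Nat.fib (i + 1) : ℤ)) (m + 1) = hatSeq (fun i => (Nat.fib i : ℤ)) m := by
  simp only [hatSeq_succ _ m, Nat.fib_add_two, Nat.cast_add, hatSeq_add]
  ring

theorem hatSeq_fib_shift_add_two (m : ℕ) :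
    hatSeq (fun i => (Nat.fib (i + 1) : ℤ)) (m + 2) =
      hatSeq (fun i => (Nat.fib (i + 1) : ℤ)) m -
        hatSeq (fun i => (Nat.fib (i + 1) : ℤ)) (m + 1) := by
  rw [hatSeq_fib_shift_succ, hatSeq_fib_shift_succ, hatSeq_succ]

/-- for `α_i = F(i+1)` (nonzero Fibonacci numbers) and `β_i = (i+1)!`,
`det(P_{α,β}(n)) = (-1)^n` for `n ≥ 2`. -/
theorem det_genPascal_fib_factorial (n : ℕ) (hn : 2 ≤ n) :
    (genPascal (fun i => (Nat.fib (i + 1) : ℤ)) (fun i => ((i + 1).factorial : ℤ)) n).det =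
      (-1 : ℤ) ^ n := by
  have h_fib_zero : hatSeq (fun i => (Nat.fib (i + 1) : ℤ)) 0 = 1 := by simp [hatSeq_zero]
  have h_fib_one : hatSeq (fun i => (Nat.fib (i + 1) : ℤ)) 1 = 0 := by
    simp [hatSeq_fib_shift_succ, hatSeq_zero]
  have h_fact_one : hatSeq (fun i => ((i + 1).factorial : ℤ)) 1 = 1 := by decide
  have h_fact_two : hatSeq (fun i => ((i + 1).factorial : ℤ)) 2 = 3 := by decide
  obtain ⟨k, rfl⟩ := Nat.exists_eq_add_of_le hn
  rw [genPascal_eq_lowerL_mul_toeplitz_mul_transpose (by simp), det_mul, det_mul, det_transpose,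
    det_lowerL, one_mul, mul_one, det_toeplitz_of_recurrence hatSeq_fib_shift_add_two h_fib_one
      (h_fact_one.trans h_fib_zero.symm), h_fib_zero, h_fact_two, pow_add]
  norm_num
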